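/- The shift S_KM on ℤ², defined by forbidding all square patterns whose top row is entirely red and whose bottom row is entirely black, is not sofic. -/
import Mathlib


/-- A cell of the two-dimensional grid `ℤ²`. -/
abbrev Cell : Type := ℤ × ℤ

/-- A configuration over the alphabet `A` is a map `ℤ² → A`. -/
abbrev Config (A : Type) : Type := Cell → A

/-- The translateCfg of a configuration `x` by `u` is `i ↦ x (i + u)`. -/
def translateCfg {A : Type} (u : Cell) (x : Config A) : Config A := fun i => x (i + u)

/-- The product topology on `A^(ℤ²)`, `A` being given the discrete topology. -/
def configTop (A : Type) : TopologicalSpace (Config A) :=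
  @Pi.topologicalSpace Cell (fun _ => A) (fun _ => ⊥)

/-- A shift (space) over `A`: a set of configurations invariant under all translations
and closed in the product topology (`A` discrete). -/
def IsShiftSpace {A : Type} (S : Set (Config A)) : Prop :=
  (∀ (u : Cell) (x : Config A), x ∈ S → translateCfg u x ∈ S) ∧
    @IsClosed (Config A) (configTop A) S

/-- A finite pattern: a function `P : F → A` with `F ⊆ ℤ²` finite. -/
structure Pattern (A : Type) where
  supp : Finset Cell
  val : supp → A

/-- `P` occurs in `x` if some translateCfg of `x` agrees with `P` on its support. -/
def Pattern.OccursIn {A : Type} (P : Pattern A) (x : Config A) : Prop :=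
  ∃ u : Cell, ∀ i : P.supp, x ((i : Cell) + u) = P.val i

/-- The shift defined by a set `F` of forbidden finite patterns. -/
def shiftOf {A : Type} (F : Set (Pattern A)) : Set (Config A) :=
  { x | ∀ P ∈ F, ¬ P.OccursIn x }

/-- A shift of finite type: a shift definable by a finite set of forbidden finite patterns. -/
def IsSFT {A : Type} (S : Set (Config A)) : Prop :=
  ∃ F : Set (Pattern A), F.Finite ∧ S = shiftOf F

/-- A sofic shift: a coordinatewise projection of a shift of finite type
over some finite alphabet. -/
def IsSofic {A : Type} (S : Set (Config A)) : Prop :=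
  ∃ (A' : Type) (_ : Fintype A') (S' : Set (Config A')) (π : A' → A),
    IsSFT S' ∧ S = (fun y => π ∘ y) '' S'

/-- The cell of `ℤ²` corresponding to an index in the `n × n` square `{0,…,n−1}²`. -/
def toCell {n : ℕ} (q : Fin n × Fin n) : Cell := ((q.1 : ℤ), (q.2 : ℤ))

/-- An `n × n` square pattern, i.e. a pattern with support `B_n = {0,…,n−1}²`. -/
abbrev SqPattern (A : Type) (n : ℕ) : Type := Fin n × Fin n → A

/-- An `n × n` square pattern occurs in `x` if some translateCfg of `x` agrees with it. -/
def SqOccursIn {A : Type} {n : ℕ} (P : SqPattern A n) (x : Config A) : Prop :=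
  ∃ u : Cell, ∀ q : Fin n × Fin n, x (toCell q + u) = P q

/-- A pattern is globally admissible for `S` if it occurs in some configuration of `S`. -/
def SqGloballyAdmissible {A : Type} {n : ℕ} (S : Set (Config A)) (P : SqPattern A n) : Prop :=
  ∃ x ∈ S, SqOccursIn P x

/-- Membership in the square `B_n = {0,…,n−1}² ⊆ ℤ²`. -/
def inBn (n : ℕ) (p : Cell) : Prop :=
  0 ≤ p.1 ∧ p.1 < (n : ℤ) ∧ 0 ≤ p.2 ∧ p.2 < (n : ℤ)

instance (n : ℕ) (p : Cell) : Decidable (inBn n p) := by unfold inBn; infer_instance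

/-- A pattern on `F_n = ℤ² \ B_n`, the complement of the `n × n` square. -/
abbrev ExtPattern (A : Type) (n : ℕ) : Type := { p : Cell // ¬ inBn n p } → A

/-- The configuration `P ∪ Q`, equal to `P` on `B_n` and to `Q` on `F_n`. -/
def glue {A : Type} {n : ℕ} (P : SqPattern A n) (Q : ExtPattern A n) : Config A :=
  fun p =>
    if h : inBn n p then
      P (⟨p.1.toNat, by unfold inBn at h; omega⟩, ⟨p.2.toNat, by unfold inBn at h; omega⟩)
    else Q ⟨p, h⟩

/-- The extension set `Ext_S(P) = {Q : F_n → A | P ∪ Q ∈ S}`. -/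
def ExtSet {A : Type} {n : ℕ} (S : Set (Config A)) (P : SqPattern A n) :
    Set (ExtPattern A n) :=
  { Q | glue P Q ∈ S }

/-- A finite sequence of sets is an increasing-union chain if no set is contained in
the union of the preceding ones. -/
def IncreasingUnionChain {β : Type} {m : ℕ} (T : Fin m → Set β) : Prop :=
  ∀ i : Fin m, ¬ T i ⊆ ⋃ (j : Fin m) (_ : j < i), T j

/-- The three-letter alphabet `{black, white, red}`. -/
inductive Letter : Type
  | black
  | white
  | red
deriving DecidableEq

/-- The shift on `ℤ²` defined by a family of forbidden square patterns. -/
def sqShiftOf {A : Type} (F : ∀ n : ℕ, Set (SqPattern A n)) : Set (Config A) :=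
  { x | ∀ (n : ℕ) (P : SqPattern A n), P ∈ F n → ¬ SqOccursIn P x }

/-- The forbidden patterns of `S_KM`: the `n × n` square patterns (`n ≥ 2`) whose top row
consists only of red letters and whose bottom row consists only of black letters. -/
def KMForbidden (n : ℕ) : Set (SqPattern Letter n) :=
  { P | 2 ≤ n ∧ ∀ i j : Fin n,
      ((j : ℕ) = 0 → P (i, j) = Letter.black) ∧
      ((j : ℕ) = n - 1 → P (i, j) = Letter.red) }

/-- The Kass–Madden shift `S_KM`, defined by forbidding all square patterns whose top row is
entirely red and whose bottom row is entirely black. -/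
def SKM : Set (Config Letter) := sqShiftOf KMForbidden

/-- `P : B_n → {black, white, red}` is a simple pattern with profile `k : Fin n → ℕ`
(`k j ≤ n`): it has no red letter and its row `j` consists of `k j` black letters followed by
`n − k j` white letters. -/
def IsSimpleWithProfile {n : ℕ} (P : SqPattern Letter n) (k : Fin n → ℕ) : Prop :=
  (∀ j, k j ≤ n) ∧
  ∀ i j : Fin n, P (i, j) = if (i : ℕ) < k j then Letter.black else Letter.white

/-! ### Auxiliary development -/

lemma toCell_add {s : ℕ} (i j : Fin s) (u : Cell) :
    toCell (i, j) + u = (((i : ℕ) : ℤ) + u.1, ((j : ℕ) : ℤ) + u.2) := rfl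

/-- Membership in `SKM`, phrased concretely: no square with all-black bottom row and
all-red top row. -/
lemma mem_SKM_iff (G : Config Letter) :
    G ∈ SKM ↔ ∀ (s : ℕ), 2 ≤ s → ∀ u : Cell,
      ¬ ((∀ i : Fin s, G ((i : ℤ) + u.1, u.2) = Letter.black) ∧
         (∀ i : Fin s, G ((i : ℤ) + u.1, (s : ℤ) - 1 + u.2) = Letter.red)) := by
  constructor
  · intro hG s hs u ⟨hbot, htop⟩
    have hforb : (fun q : Fin s × Fin s => G (toCell q + u)) ∈ KMForbidden s := by
      refine ⟨hs, fun i j => ⟨fun hj => ?_, fun hj => ?_⟩⟩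
      · have hj' : ((j : ℕ) : ℤ) = 0 := by exact_mod_cast hj
        show G (toCell (i, j) + u) = Letter.black
        rw [toCell_add, hj', zero_add]
        exact hbot i
      · have hj' : ((j : ℕ) : ℤ) = (s : ℤ) - 1 := by omega
        show G (toCell (i, j) + u) = Letter.red
        rw [toCell_add, hj']
        exact htop i
    exact hG s _ hforb ⟨u, fun q => rfl⟩
  · intro h s P hP ⟨u, hu⟩
    obtain ⟨hs, hrows⟩ := hP
    refine h s hs u ⟨fun i => ?_, fun i => ?_⟩
    · have := hu (i, ⟨0, by omega⟩)
      rw [toCell_add] at this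
      simp only [Fin.val_mk, Nat.cast_zero, zero_add] at this
      rw [this]
      exact (hrows i ⟨0, by omega⟩).1 rfl
    · have := hu (i, ⟨s - 1, by omega⟩)
      rw [toCell_add] at this
      simp only [Fin.val_mk] at this
      rw [show (s : ℤ) - 1 = ((s - 1 : ℕ) : ℤ) by omega]
      rw [this]
      exact (hrows i ⟨s - 1, by omega⟩).2 rfl

/-- A configuration with, for each row `y ∈ [0,n)`, a black run on columns `[f y, g y)`,
a red run on row `2n`, columns `[-3n, 3n)`, and white elsewhere. -/
def KCfg (n : ℕ) (f g : ℤ → ℤ) : Config Letter := fun p =>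
  if p.2 = 2 * (n : ℤ) ∧ -(3 * (n : ℤ)) ≤ p.1 ∧ p.1 < 3 * (n : ℤ) then Letter.red
  else if 0 ≤ p.2 ∧ p.2 < (n : ℤ) ∧ f p.2 ≤ p.1 ∧ p.1 < g p.2 then Letter.black
  else Letter.white

lemma KCfg_eq_red_iff (n : ℕ) (f g : ℤ → ℤ) (p : Cell) :
    KCfg n f g p = Letter.red ↔
      (p.2 = 2 * (n : ℤ) ∧ -(3 * (n : ℤ)) ≤ p.1 ∧ p.1 < 3 * (n : ℤ)) := by
  unfold KCfg; split_ifs with h1 h2 <;> simp_all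

lemma KCfg_eq_black_iff (n : ℕ) (f g : ℤ → ℤ) (p : Cell) :
    KCfg n f g p = Letter.black ↔
      (¬ (p.2 = 2 * (n : ℤ) ∧ -(3 * (n : ℤ)) ≤ p.1 ∧ p.1 < 3 * (n : ℤ)) ∧
        (0 ≤ p.2 ∧ p.2 < (n : ℤ) ∧ f p.2 ≤ p.1 ∧ p.1 < g p.2)) := by
  unfold KCfg; split_ifs with h1 h2 <;> simp_all

lemma KCfg_mem_SKM (n : ℕ) (hn : 1 ≤ n) (f g : ℤ → ℤ)
    (hf : ∀ y : ℤ, 0 ≤ y → y < (n : ℤ) → -(3 * (n : ℤ)) ≤ f y)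
    (hg : ∀ y : ℤ, 0 ≤ y → y < (n : ℤ) → g y ≤ 3 * (n : ℤ)) :
    KCfg n f g ∈ SKM ↔
      ∀ y : ℤ, 0 ≤ y → y < (n : ℤ) → g y - f y < 2 * (n : ℤ) + 1 - y := by
  rw [mem_SKM_iff]
  constructor
  · intro h y h0 h1
    by_contra hc
    push_neg at hc
    set s : ℕ := (2 * (n : ℤ) + 1 - y).toNat with hsdef
    have hsz : (s : ℤ) = 2 * (n : ℤ) + 1 - y := by omega
    have hs2 : 2 ≤ s := by omega
    refine h s hs2 (f y, y) ⟨fun i => ?_, fun i => ?_⟩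
    · have hi : 0 ≤ (i : ℤ) ∧ (i : ℤ) < (s : ℤ) := by
        constructor
        · positivity
        · exact_mod_cast i.isLt
      rw [KCfg_eq_black_iff]
      constructor
      · rintro ⟨h2n, -⟩
        have : y = 2 * (n : ℤ) := h2n
        omega
      · exact ⟨h0, h1, by show f y ≤ (i : ℤ) + f y; omega, by show (i : ℤ) + f y < g y; omega⟩
    · have hi : 0 ≤ (i : ℤ) ∧ (i : ℤ) < (s : ℤ) := by
        constructor
        · positivity
        · exact_mod_cast i.isLt
      rw [KCfg_eq_red_iff]
      have hfy := hf y h0 h1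
      have hgy := hg y h0 h1
      exact ⟨by show (s : ℤ) - 1 + y = 2 * (n : ℤ); omega,
        by show -(3 * (n : ℤ)) ≤ (i : ℤ) + f y; omega,
        by show (i : ℤ) + f y < 3 * (n : ℤ); omega⟩
  · intro h s hs u ⟨hbot, htop⟩
    have hslt : ((⟨0, by omega⟩ : Fin s) : ℤ) = 0 := by simp
    have h1 := hbot ⟨0, by omega⟩
    have h2 := hbot ⟨s - 1, by omega⟩
    have h3 := htop ⟨0, by omega⟩
    rw [KCfg_eq_black_iff] at h1 h2
    rw [KCfg_eq_red_iff] at h3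
    simp only [hslt, Fin.val_mk, zero_add] at h1 h2 h3
    obtain ⟨-, hy0, hy1, hfa, -⟩ := h1
    obtain ⟨-, -, -, -, hgb⟩ := h2
    have htoprow : (s : ℤ) - 1 + u.2 = 2 * (n : ℤ) := h3.1
    have hs1 : ((s - 1 : ℕ) : ℤ) = (s : ℤ) - 1 := by omega
    rw [hs1] at hgb
    have := h u.2 hy0 hy1
    omega

/-- The value of a profile `κ` at an integer row index (0 outside `[0,n)`). -/
def ival {n : ℕ} (κ : Fin n → Fin (n + 1)) (y : ℤ) : ℤ :=
  if h : 0 ≤ y ∧ y < (n : ℤ) then ((κ ⟨y.toNat, by omega⟩ : ℕ) : ℤ) else 0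

lemma ival_nonneg {n : ℕ} (κ : Fin n → Fin (n + 1)) (y : ℤ) : 0 ≤ ival κ y := by
  unfold ival; split
  · positivity
  · exact le_refl 0

lemma ival_le {n : ℕ} (κ : Fin n → Fin (n + 1)) (y : ℤ) : ival κ y ≤ (n : ℤ) := by
  unfold ival; split
  · exact_mod_cast Fin.is_le _
  · positivity

lemma ival_eq {n : ℕ} (κ : Fin n → Fin (n + 1)) (y : ℤ) (j : Fin n) (hj : ((j : ℕ) : ℤ) = y) :
    ival κ y = ((κ j : ℕ) : ℤ) := by
  have h : 0 ≤ y ∧ y < (n : ℤ) := by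
    have := j.isLt; constructor <;> omega
  unfold ival
  rw [dif_pos h]
  norm_cast
  congr 1
  congr 1
  apply Fin.ext
  show y.toNat = (j : ℕ)
  omega

/-- The simple square pattern with profile `κ`. -/
def Pks {n : ℕ} (κ : Fin n → Fin (n + 1)) : SqPattern Letter n := fun q =>
  if (q.1 : ℕ) < (κ q.2 : ℕ) then Letter.black else Letter.white

/-- The lower ends of the black runs of the test configuration with thresholds `μ + 1`. -/
def loF {n : ℕ} (μ : Fin n → Fin (n + 1)) : ℤ → ℤ := fun y => ival μ y + y - 2 * (n : ℤ)

/-- The test extension pattern with thresholds `μ + 1` (black runs reaching to `ival κ`). -/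
def Qext {n : ℕ} (μ κ : Fin n → Fin (n + 1)) : ExtPattern Letter n := fun p =>
  KCfg n (loF μ) (ival κ) p.1

lemma glue_inside {A : Type} {n : ℕ} (P : SqPattern A n) (Q : ExtPattern A n) (p : Cell)
    (h : inBn n p) (i j : Fin n) (hi : ((i : ℕ) : ℤ) = p.1) (hj : ((j : ℕ) : ℤ) = p.2) :
    glue P Q p = P (i, j) := by
  unfold glue
  rw [dif_pos h]
  have h' : 0 ≤ p.1 ∧ p.1 < (n : ℤ) ∧ 0 ≤ p.2 ∧ p.2 < (n : ℤ) := h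
  congr 1
  refine Prod.ext ?_ ?_ <;> apply Fin.ext <;> simp only [Fin.val_mk] <;> omega

lemma glue_outside {A : Type} {n : ℕ} (P : SqPattern A n) (Q : ExtPattern A n) (p : Cell)
    (h : ¬ inBn n p) : glue P Q p = Q ⟨p, h⟩ := by
  unfold glue
  rw [dif_neg h]

lemma glue_Pks_Qext {n : ℕ} (κ' μ κ : Fin n → Fin (n + 1)) :
    glue (Pks κ') (Qext μ κ) = KCfg n (loF μ) (ival κ') := by
  funext p
  by_cases h : inBn n p
  · have h' : 0 ≤ p.1 ∧ p.1 < (n : ℤ) ∧ 0 ≤ p.2 ∧ p.2 < (n : ℤ) := h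
    obtain ⟨ha, hb, hc, hd⟩ := h'
    have hi : (((⟨p.1.toNat, by omega⟩ : Fin n) : ℕ) : ℤ) = p.1 := by
      simp only [Fin.val_mk]; omega
    have hj : (((⟨p.2.toNat, by omega⟩ : Fin n) : ℕ) : ℤ) = p.2 := by
      simp only [Fin.val_mk]; omega
    rw [glue_inside (Pks κ') (Qext μ κ) p h _ _ hi hj]
    have hival : ival κ' p.2 = ((κ' ⟨p.2.toNat, by omega⟩ : ℕ) : ℤ) := ival_eq κ' p.2 _ hj
    have hred : ¬ (p.2 = 2 * (n : ℤ) ∧ -(3 * (n : ℤ)) ≤ p.1 ∧ p.1 < 3 * (n : ℤ)) := by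
      rintro ⟨h2, -⟩; omega
    have hlo : loF μ p.2 ≤ p.1 := by
      have := ival_le μ p.2; unfold loF; omega
    unfold Pks KCfg
    dsimp only
    rw [if_neg hred]
    refine if_congr ?_ rfl rfl
    rw [hival]
    constructor
    · intro hx
      have hx' : p.1.toNat < (κ' ⟨p.2.toNat, by omega⟩ : ℕ) := hx
      exact ⟨hc, hd, hlo, by omega⟩
    · rintro ⟨-, -, -, hx⟩
      show p.1.toNat < (κ' ⟨p.2.toNat, by omega⟩ : ℕ)
      omega
  · rw [glue_outside (Pks κ') (Qext μ κ) p h]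
    show KCfg n (loF μ) (ival κ) p = KCfg n (loF μ) (ival κ') p
    unfold inBn at h
    have b1 := ival_nonneg κ p.2
    have b2 := ival_le κ p.2
    have b3 := ival_nonneg κ' p.2
    have b4 := ival_le κ' p.2
    unfold KCfg
    split_ifs with h1 h2 h3 h2 h3 <;> first | rfl | (exfalso; omega)

lemma glue_mem_iff {n : ℕ} (hn : 1 ≤ n) (κ' μ κ : Fin n → Fin (n + 1)) :
    glue (Pks κ') (Qext μ κ) ∈ SKM ↔ ∀ j : Fin n, (κ' j : ℕ) ≤ (μ j : ℕ) := by
  rw [glue_Pks_Qext]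
  rw [KCfg_mem_SKM n hn (loF μ) (ival κ')
    (fun y h0 h1 => by have := ival_nonneg μ y; unfold loF; omega)
    (fun y h0 h1 => by have := ival_le κ' y; omega)]
  constructor
  · intro h j
    have h1 := h ((j : ℕ) : ℤ) (by positivity) (by exact_mod_cast j.isLt)
    rw [ival_eq κ' _ j rfl] at h1
    unfold loF at h1
    rw [ival_eq μ _ j rfl] at h1
    omega
  · intro h y h0 h1
    have hj : (((⟨y.toNat, by omega⟩ : Fin n) : ℕ) : ℤ) = y := by
      show (y.toNat : ℤ) = y; omega
    rw [ival_eq κ' y _ hj]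
    unfold loF
    rw [ival_eq μ y _ hj]
    have := h ⟨y.toNat, by omega⟩
    omega

/-- Hybridization: two points of an SFT agreeing on a collar around `B_n` can be
cut and pasted along `B_n`. -/
lemma hybrid {A' : Type} (F : Set (Pattern A')) (r n : ℕ)
    (hr : ∀ P ∈ F, ∀ i ∈ P.supp, i.1.natAbs ≤ r ∧ i.2.natAbs ≤ r)
    (y y' : Config A') (hy : y ∈ shiftOf F) (hy' : y' ∈ shiftOf F)
    (hagree : ∀ p : Cell, ¬ inBn n p → -(2 * (r : ℤ)) ≤ p.1 → p.1 < (n : ℤ) + 2 * r →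
      -(2 * (r : ℤ)) ≤ p.2 → p.2 < (n : ℤ) + 2 * r → y p = y' p) :
    (fun p => if inBn n p then y p else y' p) ∈ shiftOf F := by
  intro P hP hocc
  obtain ⟨u, hu⟩ := hocc
  by_cases hcase : ∃ i0 : P.supp, inBn n ((i0 : Cell) + u)
  · obtain ⟨i0, hin0⟩ := hcase
    apply hy P hP
    refine ⟨u, fun i => ?_⟩
    rw [← hu i]
    by_cases hin : inBn n ((i : Cell) + u)
    · simp only [if_pos hin]
    · simp only [if_neg hin]
      refine (hagree ((i : Cell) + u) hin ?_ ?_ ?_ ?_)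
      all_goals {
        have hb0 := hr P hP (i0 : Cell) i0.2
        have hbi := hr P hP (i : Cell) i.2
        have hIB : 0 ≤ ((i0 : Cell) + u).1 ∧ ((i0 : Cell) + u).1 < (n : ℤ) ∧
            0 ≤ ((i0 : Cell) + u).2 ∧ ((i0 : Cell) + u).2 < (n : ℤ) := hin0
        have e1 : ((i0 : Cell) + u).1 = (i0 : Cell).1 + u.1 := rfl
        have e2 : ((i0 : Cell) + u).2 = (i0 : Cell).2 + u.2 := rfl
        have e3 : ((i : Cell) + u).1 = (i : Cell).1 + u.1 := rfl
        have e4 : ((i : Cell) + u).2 = (i : Cell).2 + u.2 := rfl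
        omega }
  · push_neg at hcase
    apply hy' P hP
    refine ⟨u, fun i => ?_⟩
    rw [← hu i]
    simp only [if_neg (hcase i)]

/-- The shift `S_KM` on `ℤ²`, defined by forbidding all square patterns whose top row is
entirely red and whose bottom row is entirely black, is not sofic. -/
theorem SKM_not_sofic : ¬ IsSofic SKM := by
  classical
  rintro ⟨A', instA', S', π, ⟨F, hFfin, rfl⟩, hSKM⟩
  -- a uniform bound on the supports of the forbidden patterns
  obtain ⟨r, hr⟩ : ∃ r : ℕ, ∀ P ∈ F, ∀ i ∈ P.supp, i.1.natAbs ≤ r ∧ i.2.natAbs ≤ r := by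
    refine ⟨hFfin.toFinset.sup (fun P => P.supp.sup (fun i => max i.1.natAbs i.2.natAbs)), ?_⟩
    intro P hP i hi
    have h1 : (P.supp.sup fun i => max i.1.natAbs i.2.natAbs) ≤
        hFfin.toFinset.sup (fun P => P.supp.sup fun i => max i.1.natAbs i.2.natAbs) :=
      Finset.le_sup (f := fun P => P.supp.sup fun i => max i.1.natAbs i.2.natAbs)
        (hFfin.mem_toFinset.mpr hP)
    have h2 : max i.1.natAbs i.2.natAbs ≤ P.supp.sup (fun i => max i.1.natAbs i.2.natAbs) :=
      Finset.le_sup (f := fun i : Cell => max i.1.natAbs i.2.natAbs) hi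
    constructor
    · exact le_trans (le_trans (le_max_left _ _) h2) h1
    · exact le_trans (le_trans (le_max_right _ _) h2) h1
  -- the ambient alphabet is nonempty
  have hwhite : (fun _ => Letter.white : Config Letter) ∈ SKM := by
    rw [mem_SKM_iff]
    intro s hs u h
    exact Letter.noConfusion (h.2 ⟨0, by omega⟩)
  have hA'ne : Nonempty A' := by
    rw [hSKM] at hwhite
    obtain ⟨y, -, -⟩ := hwhite
    exact ⟨y (0, 0)⟩
  set α := Fintype.card A' with hα
  have hα1 : 1 ≤ α := Fintype.card_pos_iff.mpr hA'ne
  set c : ℕ := 8 * r + 16 * r ^ 2 with hc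
  set n : ℕ := α ^ c + 1 with hn
  have hn1 : 1 ≤ n := by omega
  -- witnesses in the SFT for the glued test configurations
  have hex : ∀ κ : Fin n → Fin (n + 1),
      ∃ y, y ∈ shiftOf F ∧ π ∘ y = glue (Pks κ) (Qext κ κ) := by
    intro κ
    have hmem : glue (Pks κ) (Qext κ κ) ∈ SKM :=
      (glue_mem_iff hn1 κ κ κ).mpr (fun j => le_refl _)
    rw [hSKM] at hmem
    obtain ⟨y, hy1, hy2⟩ := hmem
    exact ⟨y, hy1, hy2⟩
  choose Y hY1 hY2 using hex
  -- the collar around the square B_n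
  set big : Finset Cell :=
    Finset.Icc (-(2 * (r : ℤ))) ((n : ℤ) + 2 * r - 1) ×ˢ
      Finset.Icc (-(2 * (r : ℤ))) ((n : ℤ) + 2 * r - 1) with hbig
  set inner : Finset Cell :=
    Finset.Icc (0 : ℤ) ((n : ℤ) - 1) ×ˢ Finset.Icc (0 : ℤ) ((n : ℤ) - 1) with hinner
  set collar : Finset Cell := big \ inner with hcollar
  have hmem_collar : ∀ p : Cell, ¬ inBn n p → -(2 * (r : ℤ)) ≤ p.1 → p.1 < (n : ℤ) + 2 * r →
      -(2 * (r : ℤ)) ≤ p.2 → p.2 < (n : ℤ) + 2 * r → p ∈ collar := by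
    intro p hB h1 h2 h3 h4
    rw [hcollar, Finset.mem_sdiff]
    constructor
    · rw [hbig, Finset.mem_product, Finset.mem_Icc, Finset.mem_Icc]
      omega
    · rw [hinner, Finset.mem_product, Finset.mem_Icc, Finset.mem_Icc]
      intro hmem
      exact hB ⟨by omega, by omega, by omega, by omega⟩
  -- the key injection
  have hinj : Function.Injective
      (fun (κ : Fin n → Fin (n + 1)) (p : { x // x ∈ collar }) => Y κ (p : Cell)) := by
    intro κ κ' hYeq
    have hagree : ∀ p : Cell, ¬ inBn n p → -(2 * (r : ℤ)) ≤ p.1 → p.1 < (n : ℤ) + 2 * r →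
        -(2 * (r : ℤ)) ≤ p.2 → p.2 < (n : ℤ) + 2 * r → Y κ p = Y κ' p := by
      intro p hB h1 h2 h3 h4
      exact congrFun hYeq ⟨p, hmem_collar p hB h1 h2 h3 h4⟩
    have key : ∀ (a b : Fin n → Fin (n + 1)),
        (∀ p : Cell, ¬ inBn n p → -(2 * (r : ℤ)) ≤ p.1 → p.1 < (n : ℤ) + 2 * r →
          -(2 * (r : ℤ)) ≤ p.2 → p.2 < (n : ℤ) + 2 * r → Y b p = Y a p) →
        ∀ j : Fin n, (a j : ℕ) ≤ (b j : ℕ) := by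
      intro a b hab
      have hz : (fun p => if inBn n p then Y a p else Y b p) ∈ shiftOf F :=
        hybrid F r n hr _ _ (hY1 a) (hY1 b)
          (fun p hB h1 h2 h3 h4 => (hab p hB h1 h2 h3 h4).symm)
      have hπz : π ∘ (fun p => if inBn n p then Y a p else Y b p) =
          glue (Pks a) (Qext b b) := by
        funext p
        show π (if inBn n p then Y a p else Y b p) = glue (Pks a) (Qext b b) p
        by_cases hB : inBn n p
        · have h' : 0 ≤ p.1 ∧ p.1 < (n : ℤ) ∧ 0 ≤ p.2 ∧ p.2 < (n : ℤ) := hB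
          have hi : (((⟨p.1.toNat, by omega⟩ : Fin n) : ℕ) : ℤ) = p.1 := by
            show (p.1.toNat : ℤ) = p.1; omega
          have hj : (((⟨p.2.toNat, by omega⟩ : Fin n) : ℕ) : ℤ) = p.2 := by
            show (p.2.toNat : ℤ) = p.2; omega
          rw [if_pos hB]
          have e1 : π (Y a p) = glue (Pks a) (Qext a a) p := congrFun (hY2 a) p
          rw [glue_inside _ _ p hB _ _ hi hj] at e1
          rw [glue_inside _ _ p hB _ _ hi hj]
          exact e1
        · rw [if_neg hB]
          have e1 : π (Y b p) = glue (Pks b) (Qext b b) p := congrFun (hY2 b) p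
          rw [glue_outside _ _ p hB] at e1
          rw [glue_outside _ _ p hB]
          exact e1
      have hglue : glue (Pks a) (Qext b b) ∈ SKM := by
        rw [hSKM]
        exact ⟨_, hz, hπz⟩
      exact (glue_mem_iff hn1 a b b).mp hglue
    have d1 := key κ' κ hagree
    have d2 := key κ κ' (fun p hB h1 h2 h3 h4 => (hagree p hB h1 h2 h3 h4).symm)
    funext j
    exact Fin.ext (le_antisymm (d2 j) (d1 j))
  -- cardinality contradiction
  have hcard := Fintype.card_le_of_injective _ hinj
  rw [Fintype.card_fun, Fintype.card_fun, Fintype.card_coe, Fintype.card_fin,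
    Fintype.card_fin] at hcard
  -- compute the collar cardinality
  have hsub : inner ⊆ big := by
    intro p hp
    rw [hinner, Finset.mem_product, Finset.mem_Icc, Finset.mem_Icc] at hp
    rw [hbig, Finset.mem_product, Finset.mem_Icc, Finset.mem_Icc]
    omega
  have hbigcard : big.card = (n + 4 * r) * (n + 4 * r) := by
    rw [hbig, Finset.card_product, Int.card_Icc]
    have : ((n : ℤ) + 2 * r - 1 + 1 - (-(2 * (r : ℤ)))).toNat = n + 4 * r := by omega
    rw [this]
  have hinncard : inner.card = n * n := by
    rw [hinner, Finset.card_product, Int.card_Icc]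
    have : ((n : ℤ) - 1 + 1 - 0).toNat = n := by omega
    rw [this]
  have hcolcard : collar.card = 8 * r * n + 16 * r ^ 2 := by
    rw [hcollar, Finset.card_sdiff_of_subset hsub, hbigcard, hinncard]
    ring_nf
    omega
  rw [hcolcard, ← hα] at hcard
  -- final arithmetic contradiction
  have step1 : α ^ (8 * r * n + 16 * r ^ 2) ≤ α ^ (c * n) := by
    apply Nat.pow_le_pow_right hα1
    rw [hc]
    nlinarith [hn1]
  have step2 : α ^ (c * n) = (α ^ c) ^ n := by rw [pow_mul]
  have step3 : (α ^ c) ^ n ≤ n ^ n := Nat.pow_le_pow_left (by omega) n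
  have step4 : n ^ n < (n + 1) ^ n := Nat.pow_lt_pow_left (by omega) (by omega)
  have : (n + 1) ^ n ≤ n ^ n :=
    hcard.trans (step1.trans ((le_of_eq step2).trans step3))
  omega
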